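/- Consider the finite-volume Ising model on a finite set Λ ⊂ ℤ^d with inverse temperature β ≥ 0 and ferromagnetic couplings J ≥ 0. Let ℓ > 0, let B_ℓ := {y ∈ ℤ^d : |y| ≤ ℓ}, and assume B_ℓ ⊆ Λ (so in particular o ∈ B_ℓ). Then for every x ∈ Λ with |x| > ℓ: ⟨φ_o φ_x⟩_{β,Λ} ≤ ∑_{u ∈ B_ℓ} ∑_{v ∈ Λ : |v| > ℓ} ⟨φ_o φ_u⟩_{β,B_ℓ} · tanh(β J_{u,v}) · ⟨φ_v φ_x⟩_{β,Λ}. -/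

import Mathlib

/-!
High-temperature expansion: with `w_e = tanh (β J_e)`, `⟨φ_a φ_b⟩_Λ = Z_Λ(δ_a + δ_b) / Z_Λ(0)`,
where `Z_E(χ)` is the total `w`-weight of the edge sets `T ⊆ E` whose mod-2 degree function `∂T`
is `χ`. Split an edge set of `Λ` into its edges inside `B` and the set `S` of the others. For a
pair `(T₁, T₂)` counted by `Z_B(δ_o + δ_x + ∂S) Z_B(0)`, following edges of `T₁ ∆ T₂` from `o`
gives `P ⊆ T₁ ∆ T₂` with `∂P = δ_o + δ_u` for some `u` with `(δ_x + ∂S) u = 1`, and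
`(T₁, T₂) ↦ (T₂ ∆ P, T₁ ∆ P)` is a weight-preserving injection into the pairs counted by
`Z_B(δ_o + δ_u) Z_B(δ_x + ∂S + δ_u)`. Only `u ∈ B` contribute, and since `x ∉ B` such a `u` is
the endpoint of an edge `uv ∈ S` leaving `B`; pulling out that edge and resumming over `S` gives
`Z_B(δ_o + δ_u) w_uv Z_Λ(δ_x + δ_v)`.
-/

open scoped BigOperators ENNReal
open Filter

noncomputable section

namespace LongRange

abbrev V (d : ℕ) : Type := Fin d → ℤ

variable {d : ℕ}

def nrm (x : V d) : ℝ := Real.sqrt (∑ i, ((x i : ℝ)) ^ 2)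

/-- The spin value attached to a Boolean. -/
def spin (b : Bool) : ℝ := if b then 1 else -1

/-- The Ising Hamiltonian on the finite volume `Λ` with couplings `J`
(free boundary condition); the sum over unordered pairs of distinct
vertices is written as half the sum over ordered pairs. -/
def isingH (Λ : Finset (V d)) (J : V d → V d → ℝ) (φ : ↥Λ → Bool) : ℝ :=
  -(1 / 2) * ∑ u : ↥Λ, ∑ v : ↥Λ,
      if u.1 ≠ v.1 then J u.1 v.1 * spin (φ u) * spin (φ v) else 0

/-- The finite-volume Ising two-point function `⟨φ_a φ_b⟩_{β,Λ}`. -/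
def corr (Λ : Finset (V d)) (β : ℝ) (J : V d → V d → ℝ) (a b : ↥Λ) : ℝ :=
  (∑ φ : ↥Λ → Bool, spin (φ a) * spin (φ b) * Real.exp (-(β * isingH Λ J φ))) /
    ∑ φ : ↥Λ → Bool, Real.exp (-(β * isingH Λ J φ))

end LongRange

open scoped symmDiff

lemma ZMod.pi_two_eq_zero {α : Type*} : (2 : α → ZMod 2) = 0 := by
  ext; rfl

lemma Real.tanh_nonneg {x : ℝ} (hx : 0 ≤ x) : 0 ≤ Real.tanh x := by
  rw [Real.tanh_eq_sinh_div_cosh]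
  exact div_nonneg (Real.sinh_nonneg_iff.2 hx) (Real.cosh_pos x).le

lemma Real.exp_mul_eq_cosh_mul_one_add_tanh_mul (k : ℝ) {y : ℝ} (hy : y * y = 1) :
    Real.exp (k * y) = Real.cosh k * (1 + Real.tanh k * y) := by
  rw [Real.tanh_eq_sinh_div_cosh, mul_add, mul_one, ← mul_assoc,
    mul_div_cancel₀ _ (Real.cosh_pos k).ne']
  rcases mul_self_eq_one_iff.1 hy with rfl | rfl
  · rw [mul_one, mul_one, Real.cosh_add_sinh]
  · rw [mul_neg_one, mul_neg_one, ← sub_eq_add_neg, Real.cosh_sub_sinh]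

lemma Finset.sum_le_sum_of_injOn {ι κ M : Type*} [AddCommMonoid M] [PartialOrder M]
    [IsOrderedAddMonoid M] {s : Finset ι} {t : Finset κ} (i : ι → κ)
    (hi : Set.MapsTo i s t) (hinj : Set.InjOn i s) {f : ι → M} {g : κ → M}
    (hfg : ∀ a ∈ s, f a = g (i a)) (hg : ∀ b ∈ t, 0 ≤ g b) :
    ∑ a ∈ s, f a ≤ ∑ b ∈ t, g b := by
  classical
  rw [Finset.sum_congr rfl hfg, ← Finset.sum_image hinj]
  exact Finset.sum_le_sum_of_subset_of_nonneg (Finset.image_subset_iff.2 hi) fun b hb _ => hg b hb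

lemma Finset.sum_powerset_union {α M : Type*} [DecidableEq α] [AddCommMonoid M]
    {s t : Finset α} (h : Disjoint s t) (f : Finset α → M) :
    ∑ u ∈ (s ∪ t).powerset, f u = ∑ a ∈ t.powerset, ∑ b ∈ s.powerset, f (b ∪ a) := by
  induction t using Finset.induction_on generalizing f with
  | empty => simp
  | insert x t hx ih =>
    have hst := (Finset.disjoint_insert_right.1 h).2
    have hxs : x ∉ s ∪ t := by simp [hx, Finset.disjoint_insert_right.1 h]
    rw [Finset.union_insert, Finset.sum_powerset_insert hxs, Finset.sum_powerset_insert hx,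
      ih hst, ih hst]
    simp_rw [Finset.union_insert]

lemma Finset.prod_symmDiff_mul_prod_symmDiff {ι M : Type*} [DecidableEq ι] [CommMonoid M]
    {S T P : Finset ι} (hP : P ⊆ S ∆ T) (f : ι → M) :
    (∏ i ∈ S ∆ P, f i) * ∏ i ∈ T ∆ P, f i = (∏ i ∈ S, f i) * ∏ i ∈ T, f i := by
  have hunion : S ∆ P ∪ T ∆ P = S ∪ T := by
    ext i; have := @hP i; simp only [Finset.mem_union, Finset.mem_symmDiff] at *; tauto
  have hinter : S ∆ P ∩ T ∆ P = S ∩ T := by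
    ext i; have := @hP i; simp only [Finset.mem_inter, Finset.mem_symmDiff] at *; tauto
  rw [← Finset.prod_union_inter, hunion, hinter, Finset.prod_union_inter]

lemma injective_symmDiff_switch {β : Type*} [GeneralizedBooleanAlgebra β] (p : β → β) :
    Function.Injective fun T : β × β => (T.2 ∆ p (T.1 ∆ T.2), T.1 ∆ p (T.1 ∆ T.2)) := by
  intro T T' h
  obtain ⟨h₂, h₁⟩ := Prod.mk.inj h
  have hM : T.1 ∆ T.2 = T'.1 ∆ T'.2 := by
    simpa [symmDiff_symmDiff_symmDiff_comm] using congrArg₂ (· ∆ ·) h₁ h₂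
  rw [hM] at h₁ h₂
  exact Prod.ext (symmDiff_left_injective _ h₁) (symmDiff_left_injective _ h₂)

namespace LongRange

section EdgeSets

variable {α : Type*} [DecidableEq α]

def boundary (T : Finset (Sym2 α)) (v : α) : ZMod 2 := ∑ e ∈ T, if v ∈ e then 1 else 0

@[simp]
lemma boundary_empty : boundary (∅ : Finset (Sym2 α)) = 0 := by
  ext; simp [boundary]

lemma boundary_union {S T : Finset (Sym2 α)} (h : Disjoint S T) :
    boundary (S ∪ T) = boundary S + boundary T := by
  ext v; simp [boundary, Finset.sum_union h]

lemma boundary_symmDiff (S T : Finset (Sym2 α)) :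
    boundary (S ∆ T) = boundary S + boundary T := by
  have hsplit := boundary_union (disjoint_symmDiff_inf S T)
  rw [← Finset.sup_eq_union, symmDiff_sup_inf, Finset.sup_eq_union, Finset.inf_eq_inter] at hsplit
  have hcount : boundary (S ∪ T) + boundary (S ∩ T) = boundary S + boundary T := by
    ext v; exact Finset.sum_union_inter
  linear_combination hcount - hsplit - boundary (S ∩ T) * ZMod.pi_two_eq_zero

lemma boundary_insert {e : Sym2 α} {T : Finset (Sym2 α)} (he : e ∉ T) :
    boundary (insert e T) = boundary {e} + boundary T := by
  rw [Finset.insert_eq, boundary_union (Finset.disjoint_singleton_left.2 he)]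

lemma boundary_mk {a b : α} (h : a ≠ b) :
    boundary {s(a, b)} = Pi.single a 1 + Pi.single b 1 := by
  ext v
  simp only [boundary, Finset.sum_singleton, Sym2.mem_iff, Pi.add_apply, Pi.single_apply]
  by_cases hva : v = a <;> by_cases hvb : v = b <;> simp_all

lemma boundary_apply_eq_zero {T : Finset (Sym2 α)} {v : α} (h : ∀ e ∈ T, v ∉ e) :
    boundary T v = 0 :=
  Finset.sum_eq_zero fun e he => if_neg (h e he)

lemma exists_mem_of_boundary_ne_zero {T : Finset (Sym2 α)} {v : α} (h : boundary T v ≠ 0) :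
    ∃ e ∈ T, v ∈ e := by
  by_contra! hT
  exact h (boundary_apply_eq_zero hT)

/-- Removing an edge `zw ∈ M` turns `∂M = δ_z + χ` into `∂(M \ {zw}) = δ_w + χ`, so the induction
continues from `w` with the same `χ`. -/
theorem exists_subset_boundary_eq_single_add_single {M : Finset (Sym2 α)}
    (hM : ∀ e ∈ M, ¬e.IsDiag) {z : α} {χ : α → ZMod 2} (h : boundary M = Pi.single z 1 + χ) :
    ∃ u, χ u = 1 ∧ ∃ P ⊆ M, boundary P = Pi.single z 1 + Pi.single u 1 := by
  induction M using Finset.strongInduction generalizing z with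
  | H M ih =>
  by_cases hz : χ z = 1
  · exact ⟨z, hz, ∅, Finset.empty_subset M, by rw [boundary_empty, ZModModule.add_self]⟩
  have hMz : boundary M z ≠ 0 := by
    have : ∀ a : ZMod 2, a ≠ 1 → 1 + a ≠ 0 := by decide
    simpa [h] using this _ hz
  obtain ⟨e, he, hze⟩ := exists_mem_of_boundary_ne_zero hMz
  obtain ⟨w, rfl⟩ : ∃ w, e = s(z, w) := ⟨Sym2.Mem.other hze, (Sym2.other_spec hze).symm⟩
  have hzw : z ≠ w := fun hzw => hM _ he (Sym2.mk_isDiag_iff.2 hzw)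
  have hM' : boundary (M.erase s(z, w)) = Pi.single w 1 + χ := by
    have := boundary_insert (Finset.notMem_erase s(z, w) M)
    rw [Finset.insert_erase he, h, boundary_mk hzw] at this
    linear_combination -this - Pi.single w 1 * ZMod.pi_two_eq_zero
  obtain ⟨u, hu, P, hPM, hP⟩ := ih _ (Finset.erase_ssubset he)
    (fun e he' => hM e (Finset.mem_of_mem_erase he')) hM'
  refine ⟨u, hu, insert s(z, w) P,
    Finset.insert_subset he (hPM.trans (Finset.erase_subset _ _)), ?_⟩
  rw [boundary_insert fun h => Finset.notMem_erase _ M (hPM h), boundary_mk hzw, hP,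
    ZModModule.add_add_add_cancel]

def pairs (s : Finset α) : Finset (Sym2 α) := {e ∈ s.sym2 | ¬e.IsDiag}

lemma mem_pairs {s : Finset α} {e : Sym2 α} : e ∈ pairs s ↔ (∀ a ∈ e, a ∈ s) ∧ ¬e.IsDiag := by
  rw [pairs, Finset.mem_filter, Finset.mem_sym2_iff]

lemma mk_mem_pairs {s : Finset α} {a b : α} : s(a, b) ∈ pairs s ↔ a ∈ s ∧ b ∈ s ∧ a ≠ b := by
  simp [pairs, and_assoc]

lemma pairs_mono {s t : Finset α} (h : s ⊆ t) : pairs s ⊆ pairs t :=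
  Finset.filter_subset_filter _ (Finset.sym2_mono h)

lemma sum_ite_ne_eq_two_nsmul_sum_pairs {M : Type*} [AddCommMonoid M] (s : Finset α)
    (g : Sym2 α → M) :
    ∑ u ∈ s, ∑ v ∈ s, (if u ≠ v then g s(u, v) else 0) = 2 • ∑ e ∈ pairs s, g e := by
  have hoff : {p ∈ s ×ˢ s | p.1 ≠ p.2} = s.offDiag := by ext; simp [and_assoc]
  have himage : s.offDiag.image (Function.uncurry Sym2.mk) = pairs s := by
    rw [pairs, Finset.sym2_eq_image, Sym2.filter_image_mk_not_isDiag]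
  rw [← Finset.sum_product' (f := fun u v => if u ≠ v then g s(u, v) else 0), ← Finset.sum_filter,
    hoff]
  change ∑ p ∈ s.offDiag, g (Function.uncurry Sym2.mk p) = _
  rw [Finset.sum_comp, himage, Finset.smul_sum]
  refine Finset.sum_congr rfl fun e he => ?_
  induction e using Sym2.ind with
  | h a b =>
  obtain ⟨ha, hb, hab⟩ := mk_mem_pairs.1 he
  have hfiber : {p ∈ s.offDiag | Function.uncurry Sym2.mk p = s(a, b)} = {(a, b), (b, a)} := by
    ext ⟨c, d⟩; aesop
  rw [hfiber, Finset.card_pair (by simp [hab])]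

end EdgeSets

section Switching

variable {α : Type*} [DecidableEq α] {w : Sym2 α → ℝ}

def Z (w : Sym2 α → ℝ) (E : Finset (Sym2 α)) (χ : α → ZMod 2) : ℝ :=
  open Classical in ∑ T ∈ E.powerset with boundary T = χ, ∏ e ∈ T, w e

lemma Z_nonneg (hw : ∀ e, 0 ≤ w e) (E : Finset (Sym2 α)) (χ : α → ZMod 2) : 0 ≤ Z w E χ :=
  Finset.sum_nonneg fun _ _ => Finset.prod_nonneg fun e _ => hw e

lemma one_le_Z_zero (hw : ∀ e, 0 ≤ w e) (E : Finset (Sym2 α)) : 1 ≤ Z w E 0 := by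
  classical
  have hempty : ∅ ∈ {T ∈ E.powerset | boundary T = 0} := by simp
  simpa [Z] using Finset.single_le_sum (f := fun T => ∏ e ∈ T, w e)
    (fun _ _ => Finset.prod_nonneg fun e _ => hw e) hempty

lemma Z_eq_zero_of_forall_notMem {E : Finset (Sym2 α)} {χ : α → ZMod 2} {v : α} (hχ : χ v ≠ 0)
    (hE : ∀ e ∈ E, v ∉ e) : Z w E χ = 0 := by
  classical
  refine Finset.sum_eq_zero fun T hT => absurd ?_ hχ
  obtain ⟨hTE, rfl⟩ := Finset.mem_filter.1 hT
  exact boundary_apply_eq_zero fun e he => hE e (Finset.mem_powerset.1 hTE he)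

theorem Z_union {E F : Finset (Sym2 α)} (h : Disjoint E F) (χ : α → ZMod 2) :
    Z w (E ∪ F) χ = ∑ S ∈ F.powerset, (∏ e ∈ S, w e) * Z w E (χ + boundary S) := by
  classical
  simp only [Z, Finset.sum_filter, Finset.mul_sum]
  rw [Finset.sum_powerset_union h]
  refine Finset.sum_congr rfl fun S hS => Finset.sum_congr rfl fun R hR => ?_
  have hRS : Disjoint R S :=
    h.mono (Finset.mem_powerset.1 hR) (Finset.mem_powerset.1 hS)
  rw [boundary_union hRS, Finset.prod_union hRS, ← eq_sub_iff_add_eq, ZModModule.sub_eq_add]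
  split_ifs <;> ring

theorem Z_mul_Z_zero_le_sum {E : Finset (Sym2 α)} (hE : ∀ e ∈ E, ¬e.IsDiag)
    (hw : ∀ e, 0 ≤ w e) (z : α) {χ : α → ZMod 2} {U : Finset α} (hU : ∀ u, χ u = 1 → u ∈ U) :
    Z w E (Pi.single z 1 + χ) * Z w E 0 ≤
      ∑ u ∈ U with χ u = 1,
        Z w E (Pi.single z 1 + Pi.single u 1) * Z w E (χ + Pi.single u 1) := by
  classical
  have : Nonempty α := ⟨z⟩
  choose! u hu P hPM hP using fun M (hME : M ⊆ E) (hM : boundary M = Pi.single z 1 + χ) =>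
    exists_subset_boundary_eq_single_add_single (fun e he => hE e (hME he)) hM
  have hswitch : ∀ T ∈ {T ∈ E.powerset | boundary T = Pi.single z 1 + χ} ×ˢ
      {T ∈ E.powerset | boundary T = 0}, T.1 ⊆ E ∧ T.2 ⊆ E ∧ boundary T.1 = Pi.single z 1 + χ ∧
        boundary T.2 = 0 ∧ T.1 ∆ T.2 ⊆ E ∧ boundary (T.1 ∆ T.2) = Pi.single z 1 + χ := by
    intro T hT
    simp only [Finset.mem_product, Finset.mem_filter, Finset.mem_powerset] at hT
    obtain ⟨⟨hT₁E, hT₁⟩, hT₂E, hT₂⟩ := hT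
    exact ⟨hT₁E, hT₂E, hT₁, hT₂, Finset.symmDiff_subset_union.trans
      (Finset.union_subset hT₁E hT₂E), by rw [boundary_symmDiff, hT₁, hT₂, add_zero]⟩
  simp only [Z, Finset.sum_mul_sum, ← Finset.sum_product', Finset.sum_sigma']
  refine Finset.sum_le_sum_of_injOn (fun T => ⟨u (T.1 ∆ T.2),
      (T.2 ∆ P (T.1 ∆ T.2), T.1 ∆ P (T.1 ∆ T.2))⟩) ?_
    (fun T _ T' _ h => injective_symmDiff_switch P (congrArg Sigma.snd h)) ?_
    fun _ _ => mul_nonneg (Finset.prod_nonneg fun e _ => hw e) (Finset.prod_nonneg fun e _ => hw e)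
  · intro T hT
    obtain ⟨hT₁E, hT₂E, hT₁, hT₂, hME, hM⟩ := hswitch T hT
    have hPE := (hPM _ hME hM).trans hME
    simp only [Finset.coe_sigma, Set.mem_sigma_iff, Finset.mem_coe, Finset.mem_filter,
      Finset.mem_product, Finset.mem_powerset]
    refine ⟨⟨hU _ (hu _ hME hM), hu _ hME hM⟩,
      ⟨Finset.symmDiff_subset_union.trans (Finset.union_subset hT₂E hPE), ?_⟩,
      Finset.symmDiff_subset_union.trans (Finset.union_subset hT₁E hPE), ?_⟩
    · rw [boundary_symmDiff, hT₂, hP _ hME hM, zero_add]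
    · rw [boundary_symmDiff, hT₁, hP _ hME hM]
      linear_combination Pi.single z 1 * ZMod.pi_two_eq_zero
  · intro T hT
    obtain ⟨-, -, -, -, hME, hM⟩ := hswitch T hT
    rw [mul_comm]
    exact (Finset.prod_symmDiff_mul_prod_symmDiff (symmDiff_comm T.1 T.2 ▸ hPM _ hME hM) w).symm

end Switching

section SimonLieb

variable {α : Type*} [DecidableEq α] {w : Sym2 α → ℝ} {B Λ : Finset α}

lemma Z_pairs_eq_sum (hBΛ : B ⊆ Λ) (χ : α → ZMod 2) :
    Z w (pairs Λ) χ =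
      ∑ S ∈ (pairs Λ \ pairs B).powerset, (∏ e ∈ S, w e) * Z w (pairs B) (χ + boundary S) := by
  rw [← Z_union Finset.disjoint_sdiff, Finset.union_sdiff_of_subset (pairs_mono hBΛ)]

lemma exists_crossing_edge {S : Finset (Sym2 α)} (hS : S ⊆ pairs Λ \ pairs B) {u : α}
    (hu : u ∈ B) (hSu : boundary S u ≠ 0) : ∃ v ∈ Λ \ B, s(u, v) ∈ S := by
  obtain ⟨e, he, hue⟩ := exists_mem_of_boundary_ne_zero hSu
  obtain ⟨v, rfl⟩ : ∃ v, e = s(u, v) := ⟨Sym2.Mem.other hue, (Sym2.other_spec hue).symm⟩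
  obtain ⟨heΛ, heB⟩ := Finset.mem_sdiff.1 (hS he)
  obtain ⟨-, hvΛ, huv⟩ := mk_mem_pairs.1 heΛ
  exact ⟨v, Finset.mem_sdiff.2 ⟨hvΛ, fun hvB => heB (mk_mem_pairs.2 ⟨hu, hvB, huv⟩)⟩, he⟩

lemma Z_mul_Z_zero_le_sum_crossing (hw : ∀ e, 0 ≤ w e) {z x : α} (hz : z ∈ B)
    (hx : x ∈ Λ \ B) {S : Finset (Sym2 α)} (hS : S ⊆ pairs Λ \ pairs B) :
    Z w (pairs B) (Pi.single z 1 + (Pi.single x 1 + boundary S)) * Z w (pairs B) 0 ≤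
      ∑ u ∈ B, ∑ v ∈ Λ \ B, if s(u, v) ∈ S then
        Z w (pairs B) (Pi.single z 1 + Pi.single u 1) *
          Z w (pairs B) (Pi.single x 1 + boundary S + Pi.single u 1) else 0 := by
  obtain ⟨hxΛ, hxB⟩ := Finset.mem_sdiff.1 hx
  have hSΛ : ∀ u ∉ Λ, boundary S u = 0 := fun u hu => boundary_apply_eq_zero fun e he hue =>
    hu ((mem_pairs.1 (Finset.mem_sdiff.1 (hS he)).1).1 u hue)
  have hU : ∀ u, (Pi.single x 1 + boundary S : α → ZMod 2) u = 1 → u ∈ Λ := by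
    intro u hu
    by_contra huΛ
    simp [hSΛ u huΛ, show u ≠ x from fun h => huΛ (h ▸ hxΛ)] at hu
  refine (Z_mul_Z_zero_le_sum (fun e he => (mem_pairs.1 he).2) hw z hU).trans ?_
  have hF : ∀ u, 0 ≤ Z w (pairs B) (Pi.single z 1 + Pi.single u 1) *
      Z w (pairs B) (Pi.single x 1 + boundary S + Pi.single u 1) :=
    fun u => mul_nonneg (Z_nonneg hw _ _) (Z_nonneg hw _ _)
  rw [← Finset.sum_filter_of_ne (p := (· ∈ B))]
  · refine (Finset.sum_le_sum fun u hu => ?_).trans (Finset.sum_le_sum_of_subset_of_nonneg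
      (fun u hu => (Finset.mem_filter.1 hu).2) fun u _ _ => Finset.sum_nonneg fun v _ => ?_)
    · simp only [Finset.mem_filter] at hu
      obtain ⟨⟨huΛ, hχu⟩, huB⟩ := hu
      have hSu : boundary S u ≠ 0 := by
        simp [show u ≠ x from fun h => hxB (h ▸ huB)] at hχu
        simp [hχu]
      obtain ⟨v, hv, huvS⟩ := exists_crossing_edge hS huB hSu
      refine le_of_eq_of_le (if_pos huvS).symm (Finset.single_le_sum (f := fun v =>
        if s(u, v) ∈ S then _ else 0) (fun v _ => ?_) hv)
      split_ifs
      exacts [hF u, le_rfl]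
    · split_ifs
      exacts [hF u, le_rfl]
  · intro u _ hu
    by_contra huB
    refine hu (mul_eq_zero_of_left (Z_eq_zero_of_forall_notMem (v := u) ?_ ?_) _)
    · simp [show u ≠ z from fun h => huB (h ▸ hz)]
    · exact fun e he hue => huB ((mem_pairs.1 he).1 u hue)

lemma sum_powerset_mul_ite_mem_le (hBΛ : B ⊆ Λ) (hw : ∀ e, 0 ≤ w e) {u v x : α} (hu : u ∈ B)
    (hv : v ∈ Λ \ B) :
    ∑ S ∈ (pairs Λ \ pairs B).powerset, (∏ e ∈ S, w e) *
        (if s(u, v) ∈ S then Z w (pairs B) (Pi.single x 1 + boundary S + Pi.single u 1) else 0) ≤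
      w s(u, v) * Z w (pairs Λ) (Pi.single x 1 + Pi.single v 1) := by
  obtain ⟨hvΛ, hvB⟩ := Finset.mem_sdiff.1 hv
  have huv : u ≠ v := fun h => hvB (h ▸ hu)
  have he : s(u, v) ∈ pairs Λ \ pairs B :=
    Finset.mem_sdiff.2 ⟨mk_mem_pairs.2 ⟨hBΛ hu, hvΛ, huv⟩, fun h => hvB (mk_mem_pairs.1 h).2.1⟩
  rw [← Finset.insert_erase he, Finset.sum_powerset_insert (Finset.notMem_erase _ _),
    Finset.sum_eq_zero fun S hS => by
      rw [if_neg fun h => Finset.notMem_erase _ _ (Finset.mem_powerset.1 hS h), mul_zero],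
    zero_add, Z_pairs_eq_sum hBΛ, Finset.mul_sum]
  refine (Finset.sum_congr rfl fun S hS => ?_).trans_le
    (Finset.sum_le_sum_of_subset_of_nonneg (Finset.powerset_mono.2 (Finset.erase_subset _ _))
      fun S _ _ => mul_nonneg (hw _) (mul_nonneg (Finset.prod_nonneg fun e _ => hw e)
        (Z_nonneg hw _ _)))
  have heS : s(u, v) ∉ S := fun h => Finset.notMem_erase _ _ (Finset.mem_powerset.1 hS h)
  rw [if_pos (Finset.mem_insert_self _ _), Finset.prod_insert heS, boundary_insert heS,
    boundary_mk huv, mul_assoc]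
  congr 3
  linear_combination Pi.single u 1 * ZMod.pi_two_eq_zero

theorem Z_simonLieb (hBΛ : B ⊆ Λ) (hw : ∀ e, 0 ≤ w e) {z x : α} (hz : z ∈ B) (hx : x ∈ Λ \ B) :
    Z w (pairs Λ) (Pi.single z 1 + Pi.single x 1) * Z w (pairs B) 0 ≤
      ∑ u ∈ B, ∑ v ∈ Λ \ B, Z w (pairs B) (Pi.single z 1 + Pi.single u 1) *
        (w s(u, v) * Z w (pairs Λ) (Pi.single x 1 + Pi.single v 1)) := calc
  _ = ∑ S ∈ (pairs Λ \ pairs B).powerset, (∏ e ∈ S, w e) *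
        (Z w (pairs B) (Pi.single z 1 + (Pi.single x 1 + boundary S)) * Z w (pairs B) 0) := by
    simp_rw [Z_pairs_eq_sum hBΛ, Finset.sum_mul, add_assoc, mul_assoc]
  _ ≤ ∑ S ∈ (pairs Λ \ pairs B).powerset, (∏ e ∈ S, w e) *
        ∑ u ∈ B, ∑ v ∈ Λ \ B, if s(u, v) ∈ S then
          Z w (pairs B) (Pi.single z 1 + Pi.single u 1) *
            Z w (pairs B) (Pi.single x 1 + boundary S + Pi.single u 1) else 0 :=
    Finset.sum_le_sum fun S hS => mul_le_mul_of_nonneg_left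
      (Z_mul_Z_zero_le_sum_crossing hw hz hx (Finset.mem_powerset.1 hS))
      (Finset.prod_nonneg fun e _ => hw e)
  _ = ∑ u ∈ B, ∑ v ∈ Λ \ B, Z w (pairs B) (Pi.single z 1 + Pi.single u 1) *
        ∑ S ∈ (pairs Λ \ pairs B).powerset, (∏ e ∈ S, w e) *
          (if s(u, v) ∈ S then Z w (pairs B) (Pi.single x 1 + boundary S + Pi.single u 1)
            else 0) := by
    simp_rw [Finset.mul_sum]
    rw [Finset.sum_comm]
    refine Finset.sum_congr rfl fun u _ => ?_
    rw [Finset.sum_comm]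
    refine Finset.sum_congr rfl fun v _ => Finset.sum_congr rfl fun S _ => ?_
    split_ifs <;> ring
  _ ≤ _ := Finset.sum_le_sum fun u hu => Finset.sum_le_sum fun v hv =>
    mul_le_mul_of_nonneg_left (sum_powerset_mul_ite_mem_le hBΛ hw hu hv) (Z_nonneg hw _ _)

end SimonLieb

section Expansion

variable {d : ℕ} {Λ : Finset (V d)} {J : V d → V d → ℝ}

def edgeSpin (φ : ↥Λ → Bool) (e : Sym2 (V d)) : ℝ :=
  ∏ v : ↥Λ, spin (φ v) ^ (if v.1 ∈ e then 1 else 0)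

lemma spin_mul_self (b : Bool) : spin b * spin b = 1 := by
  cases b <;> simp [spin]

lemma edgeSpin_mk (φ : ↥Λ → Bool) {u v : ↥Λ} (h : u ≠ v) :
    edgeSpin φ s(u.1, v.1) = spin (φ u) * spin (φ v) := by
  have hsplit : ∀ y : ↥Λ, (if y.1 ∈ s(u.1, v.1) then 1 else 0) =
      (if u = y then 1 else 0) + (if v = y then 1 else 0) := by
    intro y
    by_cases hu : u = y <;> by_cases hv : v = y <;> grind
  simp only [edgeSpin, hsplit, pow_add, Finset.prod_mul_distrib, Finset.prod_pow_boole,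
    Finset.mem_univ, if_true]

lemma edgeSpin_mul_self (φ : ↥Λ → Bool) (e : Sym2 (V d)) : edgeSpin φ e * edgeSpin φ e = 1 := by
  rw [edgeSpin, ← Finset.prod_mul_distrib]
  exact Finset.prod_eq_one fun v _ => by rw [← mul_pow, spin_mul_self, one_pow]

lemma prod_edgeSpin (φ : ↥Λ → Bool) (T : Finset (Sym2 (V d))) :
    ∏ e ∈ T, edgeSpin φ e = ∏ v : ↥Λ, spin (φ v) ^ ∑ e ∈ T, (if v.1 ∈ e then 1 else 0) := by
  simp only [edgeSpin]
  rw [Finset.prod_comm]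
  simp only [Finset.prod_pow_eq_pow_sum]

lemma neg_mul_isingH (hJs : ∀ u v, J u v = J v u) (β : ℝ) (φ : ↥Λ → Bool) :
    -(β * isingH Λ J φ) = ∑ e ∈ pairs Λ, β * Sym2.lift ⟨J, hJs⟩ e * edgeSpin φ e := by
  have hsum : ∑ u : ↥Λ, ∑ v : ↥Λ,
      (if u.1 ≠ v.1 then J u.1 v.1 * spin (φ u) * spin (φ v) else 0) =
      ∑ u ∈ Λ, ∑ v ∈ Λ, if u ≠ v then Sym2.lift ⟨J, hJs⟩ s(u, v) * edgeSpin φ s(u, v) else 0 := by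
    rw [← Finset.sum_coe_sort Λ]
    refine Finset.sum_congr rfl fun u _ => ?_
    rw [← Finset.sum_coe_sort Λ]
    refine Finset.sum_congr rfl fun v _ => ?_
    split_ifs with h
    · rw [edgeSpin_mk φ (Subtype.coe_ne_coe.1 h), Sym2.lift_mk, mul_assoc]
    · rfl
  rw [isingH, hsum,
    sum_ite_ne_eq_two_nsmul_sum_pairs Λ fun e => Sym2.lift ⟨J, hJs⟩ e * edgeSpin φ e, nsmul_eq_mul,
    Finset.mul_sum, Finset.mul_sum, Finset.mul_sum, ← Finset.sum_neg_distrib]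
  refine Finset.sum_congr rfl fun e _ => ?_
  push_cast
  ring

lemma exp_neg_mul_isingH (hJs : ∀ u v, J u v = J v u) (β : ℝ) (φ : ↥Λ → Bool) :
    Real.exp (-(β * isingH Λ J φ)) = (∏ e ∈ pairs Λ, Real.cosh (β * Sym2.lift ⟨J, hJs⟩ e)) *
      ∑ T ∈ (pairs Λ).powerset, ∏ e ∈ T, Real.tanh (β * Sym2.lift ⟨J, hJs⟩ e) * edgeSpin φ e := by
  rw [neg_mul_isingH hJs, Real.exp_sum, ← Finset.prod_one_add, ← Finset.prod_mul_distrib]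
  exact Finset.prod_congr rfl fun e _ => Real.exp_mul_eq_cosh_mul_one_add_tanh_mul _ (edgeSpin_mul_self φ e)

lemma sum_prod_spin_pow (n : ↥Λ → ℕ) :
    ∑ φ : ↥Λ → Bool, ∏ v, spin (φ v) ^ n v = if ∀ v, Even (n v) then 2 ^ Λ.card else 0 := by
  have hsite : ∀ m : ℕ, ∑ b : Bool, spin b ^ m = if Even m then 2 else 0 := by
    intro m
    rcases Nat.even_or_odd m with h | h
    · simp [spin, h.neg_one_pow, h, one_add_one_eq_two]
    · simp [spin, h.neg_one_pow, Nat.not_even_iff_odd.2 h]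
  rw [← Fintype.prod_sum (fun v b => spin b ^ n v)]
  simp only [hsite, Fintype.prod_ite_zero, Finset.prod_const, Finset.card_univ, Fintype.card_coe]

lemma forall_even_iff_boundary_eq (a b : ↥Λ) {T : Finset (Sym2 (V d))} (hT : T ⊆ pairs Λ) :
    (∀ v : ↥Λ, Even ((if a = v then 1 else 0) + (if b = v then 1 else 0) +
        ∑ e ∈ T, if v.1 ∈ e then 1 else 0)) ↔
      boundary T = Pi.single a.1 1 + Pi.single b.1 1 := by
  have hcast : ∀ v : ↥Λ, (((if a = v then 1 else 0) + (if b = v then 1 else 0) +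
      ∑ e ∈ T, if v.1 ∈ e then 1 else 0 : ℕ) : ZMod 2) =
        (Pi.single a.1 1 + Pi.single b.1 1 : V d → ZMod 2) v + boundary T v := by
    intro v
    simp only [boundary, Pi.add_apply, Pi.single_apply, ← Subtype.ext_iff, eq_comm (a := v)]
    push_cast
    rfl
  simp_rw [← ZMod.natCast_eq_zero_iff_even, hcast, CharTwo.add_eq_zero, funext_iff]
  refine ⟨fun h v => ?_, fun h v => (h v).symm⟩
  by_cases hv : v ∈ Λ
  · exact (h ⟨v, hv⟩).symm
  · have hva : v ≠ a.1 := fun h => hv (h ▸ a.2)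
    have hvb : v ≠ b.1 := fun h => hv (h ▸ b.2)
    rw [boundary_apply_eq_zero fun e he hve => hv ((mem_pairs.1 (hT he)).1 v hve)]
    simp [hva, hvb]

open Classical in
lemma sum_spin_mul_spin_mul_prod_edgeSpin (a b : ↥Λ) {T : Finset (Sym2 (V d))}
    (hT : T ⊆ pairs Λ) :
    ∑ φ : ↥Λ → Bool, spin (φ a) * spin (φ b) * ∏ e ∈ T, edgeSpin φ e =
      if boundary T = Pi.single a.1 1 + Pi.single b.1 1 then 2 ^ Λ.card else 0 := by
  have hprod : ∀ φ : ↥Λ → Bool, spin (φ a) * spin (φ b) * ∏ e ∈ T, edgeSpin φ e =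
      ∏ v, spin (φ v) ^ ((if a = v then 1 else 0) + (if b = v then 1 else 0) +
        ∑ e ∈ T, if v.1 ∈ e then 1 else 0) := by
    intro φ
    simp only [pow_add, Finset.prod_mul_distrib, Finset.prod_pow_boole, Finset.mem_univ, if_true,
      prod_edgeSpin]
  rw [Finset.sum_congr rfl fun φ _ => hprod φ, sum_prod_spin_pow]
  exact if_congr (forall_even_iff_boundary_eq a b hT) rfl rfl

lemma sum_spin_mul_spin_mul_exp (hJs : ∀ u v, J u v = J v u) (β : ℝ) (a b : ↥Λ) :
    ∑ φ : ↥Λ → Bool, spin (φ a) * spin (φ b) * Real.exp (-(β * isingH Λ J φ)) =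
      (∏ e ∈ pairs Λ, Real.cosh (β * Sym2.lift ⟨J, hJs⟩ e)) * 2 ^ Λ.card *
        Z (fun e => Real.tanh (β * Sym2.lift ⟨J, hJs⟩ e)) (pairs Λ)
          (Pi.single a.1 1 + Pi.single b.1 1) := by
  classical
  simp only [exp_neg_mul_isingH hJs, Finset.mul_sum, Finset.prod_mul_distrib]
  rw [Finset.sum_comm, Z, Finset.sum_filter, Finset.mul_sum]
  refine Finset.sum_congr rfl fun T hT => ?_
  set C := ∏ e ∈ pairs Λ, Real.cosh (β * Sym2.lift ⟨J, hJs⟩ e)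
  set W := ∏ e ∈ T, Real.tanh (β * Sym2.lift ⟨J, hJs⟩ e)
  calc _ = C * W * ∑ φ : ↥Λ → Bool, spin (φ a) * spin (φ b) * ∏ e ∈ T, edgeSpin φ e := by
        rw [Finset.mul_sum]
        exact Finset.sum_congr rfl fun φ _ => by ring
    _ = _ := by
        rw [sum_spin_mul_spin_mul_prod_edgeSpin a b (Finset.mem_powerset.1 hT)]
        split_ifs <;> ring

theorem corr_eq_Z_div_Z (hJs : ∀ u v, J u v = J v u) (β : ℝ) (a b : ↥Λ) :
    corr Λ β J a b =
      Z (fun e => Real.tanh (β * Sym2.lift ⟨J, hJs⟩ e)) (pairs Λ)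
          (Pi.single a.1 1 + Pi.single b.1 1) /
        Z (fun e => Real.tanh (β * Sym2.lift ⟨J, hJs⟩ e)) (pairs Λ) 0 := by
  have hden : ∑ φ : ↥Λ → Bool, Real.exp (-(β * isingH Λ J φ)) =
      ∑ φ : ↥Λ → Bool, spin (φ a) * spin (φ a) * Real.exp (-(β * isingH Λ J φ)) := by
    simp only [spin_mul_self, one_mul]
  rw [corr, hden, sum_spin_mul_spin_mul_exp, sum_spin_mul_spin_mul_exp, ZModModule.add_self,
    mul_div_mul_left _ _ (by positivity)]

end Expansion

theorem corr_le_sum_corr_mul_tanh_mul_corr {d : ℕ} {β : ℝ} (hβ : 0 ≤ β) {J : V d → V d → ℝ}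
    (hJ : ∀ u v, 0 ≤ J u v) (hJs : ∀ u v, J u v = J v u) {B Λ : Finset (V d)} (hBΛ : B ⊆ Λ)
    {z x : V d} (hz : z ∈ B) (hx : x ∈ Λ) (hxB : x ∉ B) :
    corr Λ β J ⟨z, hBΛ hz⟩ ⟨x, hx⟩ ≤
      ∑ u ∈ B.attach, ∑ v ∈ Λ.attach, if v.1 ∉ B then
        corr B β J ⟨z, hz⟩ u * Real.tanh (β * J u.1 v.1) * corr Λ β J v ⟨x, hx⟩ else 0 := by
  simp only [corr_eq_Z_div_Z hJs]
  set w : Sym2 (V d) → ℝ := fun e => Real.tanh (β * Sym2.lift ⟨J, hJs⟩ e) with hw_def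
  have hw : ∀ e, 0 ≤ w e := fun e => Real.tanh_nonneg (mul_nonneg hβ (Sym2.ind hJ e))
  have hZB : 0 < Z w (pairs B) 0 := one_pos.trans_le (one_le_Z_zero hw _)
  have hZΛ : 0 < Z w (pairs Λ) 0 := one_pos.trans_le (one_le_Z_zero hw _)
  calc _ = Z w (pairs Λ) (Pi.single z 1 + Pi.single x 1) * Z w (pairs B) 0 /
        (Z w (pairs B) 0 * Z w (pairs Λ) 0) := by
        field_simp
    _ ≤ (∑ u ∈ B, ∑ v ∈ Λ \ B, Z w (pairs B) (Pi.single z 1 + Pi.single u 1) *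
          (w s(u, v) * Z w (pairs Λ) (Pi.single x 1 + Pi.single v 1))) /
        (Z w (pairs B) 0 * Z w (pairs Λ) 0) := by
        gcongr
        exact Z_simonLieb hBΛ hw hz (Finset.mem_sdiff.2 ⟨hx, hxB⟩)
    _ = _ := by
        rw [Finset.sum_div, ← Finset.sum_attach B]
        refine Finset.sum_congr rfl fun u _ => ?_
        rw [Finset.sum_div, Finset.sdiff_eq_filter, Finset.sum_filter, ← Finset.sum_attach Λ]
        refine Finset.sum_congr rfl fun v _ => ?_
        split_ifs
        · rfl
        · simp only [hw_def, Sym2.lift_mk, add_comm (Pi.single x 1)]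
          field_simp

theorem statement11_general (d : ℕ) (Λ : Finset (V d))
    (β : ℝ) (hβ : 0 ≤ β) (J : V d → V d → ℝ)
    (hJ : ∀ u v, 0 ≤ J u v) (hJs : ∀ u v, J u v = J v u)
    (ℓ : ℝ)
    (B : Finset (V d)) (hB : ∀ y : V d, y ∈ B ↔ nrm y ≤ ℓ) (hBΛ : B ⊆ Λ)
    (h0B : (0 : V d) ∈ B)
    (x : V d) (hx : x ∈ Λ) (hxℓ : ℓ < nrm x) :
    corr Λ β J ⟨0, hBΛ h0B⟩ ⟨x, hx⟩ ≤
      ∑ u ∈ B.attach, ∑ v ∈ Λ.attach,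
        if ℓ < nrm v.1 then
          corr B β J ⟨0, h0B⟩ u * Real.tanh (β * J u.1 v.1) * corr Λ β J v ⟨x, hx⟩
        else 0 := by
  have hB' : ∀ y : V d, y ∉ B ↔ ℓ < nrm y := fun y => by rw [hB, not_le]
  simpa only [hB'] using
    corr_le_sum_corr_mul_tanh_mul_corr hβ hJ hJs hBΛ h0B hx ((hB' x).2 hxℓ)

/-- Simon–Lieb type inequality for the finite-volume Ising model. -/
theorem statement11 (d : ℕ) (hd : 1 ≤ d) (Λ : Finset (V d))
    (β : ℝ) (hβ : 0 ≤ β) (J : V d → V d → ℝ)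
    (hJ : ∀ u v, 0 ≤ J u v) (hJs : ∀ u v, J u v = J v u)
    (ℓ : ℝ) (hℓ : 0 < ℓ)
    (B : Finset (V d)) (hB : ∀ y : V d, y ∈ B ↔ nrm y ≤ ℓ) (hBΛ : B ⊆ Λ)
    (h0B : (0 : V d) ∈ B)
    (x : V d) (hx : x ∈ Λ) (hxℓ : ℓ < nrm x) :
    corr Λ β J ⟨0, hBΛ h0B⟩ ⟨x, hx⟩ ≤
      ∑ u ∈ B.attach, ∑ v ∈ Λ.attach,
        if ℓ < nrm v.1 then
          corr B β J ⟨0, h0B⟩ u * Real.tanh (β * J u.1 v.1) * corr Λ β J v ⟨x, hx⟩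
        else 0 :=
  statement11_general d Λ β hβ J hJ hJs ℓ B hB hBΛ h0B x hx hxℓ

end LongRange
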